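/- arXiv:1006.4661 — 6 statements merged into one kernel-verified Lean document; each statement's English description precedes it below -/
import Mathlib

section
/- Let N be a 1-net of the unit sphere S^{n-1}(1) in R^n, let 0 ≤ α < 1/2 and 0 < ε < 1/2 − α. If Ñ is a set such that for every v ∈ N there exists ṽ ∈ Ñ with ‖v − ṽ‖₂ ≤ ε, then the convex hull of Ñ contains the sphere S^{n-1}(α) of radius α (in fact the closed ball of radius α). -/
/-!
If every unit vector `z` has inner product at least `β := 1/2 - ε` with some point of `Ñ`, then no
linear functional can separate a point of the ball of radius `β` from `Ñ`, so that ball lies in the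
closure of the convex hull of `Ñ`. The unit vector `z` gets this from the net: a net point `v`
with `‖v - z‖ ≤ 1` has `⟪z, v⟫ ≥ 1/2`, and moving to its approximation costs at most `ε`. In finite
dimension a convex set and its closure have the same interior, so the open ball of radius `β`,
hence the closed ball of radius `α < β`, lies in the convex hull itself.
-/

open Metric Set RealInnerProductSpace

variable {E : Type*} [NormedAddCommGroup E] [InnerProductSpace ℝ E]

theorem Convex.interior_closure_eq_interior [FiniteDimensional ℝ E] {s : Set E}
    (hs : Convex ℝ s) : interior (closure s) = interior s := by
  rcases (interior (closure s)).eq_empty_or_nonempty with h | h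
  · rw [h, eq_comm, ← subset_empty_iff, ← h]
    exact interior_mono subset_closure
  · refine hs.interior_closure_eq_interior_of_nonempty_interior ?_
    rw [hs.interior_nonempty_iff_affineSpan_eq_top, eq_top_iff,
      ← isOpen_interior.affineSpan_eq_top h]
    exact affineSpan_le.mpr <| interior_subset.trans <|
      closure_minimal (subset_affineSpan ℝ s) (affineSpan ℝ s).closed_of_finiteDimensional

theorem mem_closure_convexHull_of_forall_inner_le [CompleteSpace E] {s : Set E} {x : E}
    (h : ∀ g : E, ∃ w ∈ s, ⟪g, x⟫ ≤ ⟪g, w⟫) : x ∈ closure (convexHull ℝ s) := by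
  by_contra hx
  obtain ⟨f, u, hfs, hfx⟩ :=
    geometric_hahn_banach_closed_point (convex_convexHull ℝ s).closure isClosed_closure hx
  obtain ⟨w, hws, hw⟩ := h ((InnerProductSpace.toDual ℝ E).symm f)
  rw [InnerProductSpace.toDual_symm_apply, InnerProductSpace.toDual_symm_apply] at hw
  exact (hfs w (subset_closure (subset_convexHull ℝ s hws))).not_ge (hfx.le.trans hw)

section SupportFunction

variable {s : Set E} {β : ℝ}

theorem exists_mul_norm_le_inner (hs : s.Nonempty)
    (h : ∀ z : E, ‖z‖ = 1 → ∃ w ∈ s, β ≤ ⟪z, w⟫) (g : E) : ∃ w ∈ s, β * ‖g‖ ≤ ⟪g, w⟫ := by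
  rcases eq_or_ne g 0 with rfl | hg
  · obtain ⟨w, hw⟩ := hs
    exact ⟨w, hw, by simp⟩
  · obtain ⟨w, hws, hw⟩ := h (‖g‖⁻¹ • g) (norm_smul_inv_norm hg)
    rw [real_inner_smul_left, le_inv_mul_iff₀ (norm_pos_iff.mpr hg), mul_comm] at hw
    exact ⟨w, hws, hw⟩

theorem closedBall_subset_closure_convexHull [CompleteSpace E] (hs : s.Nonempty)
    (h : ∀ z : E, ‖z‖ = 1 → ∃ w ∈ s, β ≤ ⟪z, w⟫) : closedBall 0 β ⊆ closure (convexHull ℝ s) := by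
  intro x hx
  refine mem_closure_convexHull_of_forall_inner_le fun g => ?_
  obtain ⟨w, hws, hw⟩ := exists_mul_norm_le_inner hs h g
  refine ⟨w, hws, (real_inner_le_norm g x).trans (le_trans ?_ hw)⟩
  rw [mul_comm]
  gcongr
  simpa using hx

theorem ball_subset_convexHull [FiniteDimensional ℝ E] (hs : s.Nonempty)
    (h : ∀ z : E, ‖z‖ = 1 → ∃ w ∈ s, β ≤ ⟪z, w⟫) : ball 0 β ⊆ convexHull ℝ s :=
  calc ball 0 β ⊆ interior (closure (convexHull ℝ s)) :=
        isOpen_ball.subset_interior_iff.mpr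
          (ball_subset_closedBall.trans (closedBall_subset_closure_convexHull hs h))
    _ = interior (convexHull ℝ s) := (convex_convexHull ℝ s).interior_closure_eq_interior
    _ ⊆ convexHull ℝ s := interior_subset

end SupportFunction

theorem one_half_le_inner_of_norm_sub_le_one {v z : E} (hv : ‖v‖ = 1) (hz : ‖z‖ = 1)
    (h : ‖v - z‖ ≤ 1) : 1 / 2 ≤ ⟪z, v⟫ := by
  have hsq : ‖v - z‖ ^ 2 ≤ 1 := pow_le_one₀ (norm_nonneg _) h
  rw [norm_sub_sq_real, hv, hz, real_inner_comm] at hsq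
  linarith

theorem exists_inner_ge_of_approx_net {N Ñ : Set E} {ε : ℝ} (hN : N ⊆ sphere 0 1)
    (hnet : ∀ z ∈ sphere (0 : E) 1, ∃ v ∈ N, ‖v - z‖ ≤ 1)
    (happrox : ∀ v ∈ N, ∃ w ∈ Ñ, ‖v - w‖ ≤ ε) {z : E} (hz : ‖z‖ = 1) :
    ∃ w ∈ Ñ, 1 / 2 - ε ≤ ⟪z, w⟫ := by
  obtain ⟨v, hvN, hvz⟩ := hnet z (by simpa using hz)
  obtain ⟨w, hw, hvw⟩ := happrox v hvN
  have hzv := one_half_le_inner_of_norm_sub_le_one (by simpa using hN hvN) hz hvz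
  have hshift : ⟪z, v - w⟫ ≤ ε := (real_inner_le_norm _ _).trans (by rwa [hz, one_mul])
  rw [inner_sub_right] at hshift
  exact ⟨w, hw, by linarith⟩

theorem stmt0_general {n : ℕ} (hn : 0 < n) (N Ntil : Set (EuclideanSpace ℝ (Fin n)))
    (hN : N ⊆ Metric.sphere 0 1)
    (hnet : ∀ z ∈ Metric.sphere (0 : EuclideanSpace ℝ (Fin n)) 1, ∃ v ∈ N, ‖v - z‖ ≤ 1)
    (α ε : ℝ) (hε : ε < 1/2 - α)
    (happrox : ∀ v ∈ N, ∃ w ∈ Ntil, ‖v - w‖ ≤ ε) :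
    Metric.closedBall (0 : EuclideanSpace ℝ (Fin n)) α ⊆ convexHull ℝ Ntil := by
  have key := fun z (hz : ‖z‖ = 1) => exists_inner_ge_of_approx_net hN hnet happrox hz
  have hne : Ntil.Nonempty := by
    obtain ⟨w, hw, -⟩ := key (EuclideanSpace.single ⟨0, hn⟩ 1) (by simp)
    exact ⟨w, hw⟩
  exact (closedBall_subset_ball (by linarith)).trans (ball_subset_convexHull hne key)

theorem stmt0 {n : ℕ} (hn : 0 < n) (N Ntil : Set (EuclideanSpace ℝ (Fin n)))
    (hN : N ⊆ Metric.sphere 0 1)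
    (hnet : ∀ z ∈ Metric.sphere (0 : EuclideanSpace ℝ (Fin n)) 1, ∃ v ∈ N, ‖v - z‖ ≤ 1)
    (α ε : ℝ) (hα0 : 0 ≤ α) (hα : α < 1/2) (hε0 : 0 < ε) (hε : ε < 1/2 - α)
    (happrox : ∀ v ∈ N, ∃ w ∈ Ntil, ‖v - w‖ ≤ ε) :
    Metric.closedBall (0 : EuclideanSpace ℝ (Fin n)) α ⊆ convexHull ℝ Ntil :=
  stmt0_general hn N Ntil hN hnet α ε hε happrox
end

section
/- Let F ∈ R[x₁,…,xₙ] be a quasiconvex polynomial, a ∈ R^n a fixed point, and b ∈ R^n a nonzero fixed vector. If the univariate polynomial λ ↦ F(a + λb) is constant, then for every x ∈ R^n the polynomial λ ↦ F(x + λb) is constant. -/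
/-!
Let `c = F(a)`. Every sublevel set `{F ≤ max (F x) c}` is closed and convex and contains both `x`
and the line `a + ℝ b`, so it contains the parallel line `x + ℝ b`: the segments from `x` to
`a + (μ / t) b` pass through `x + μ b + t (a - x)`, which tends to `x + μ b` as `t → 0⁺`. Hence
`λ ↦ F(x + λ b)` is a univariate polynomial bounded above. If it were not constant it would tend
to `-∞` in both directions, and quasiconvexity at the midpoint `x` of `x ± T b` would force
`F(x) ≤ max (F(x + T b)) (F(x - T b)) → -∞`.
-/

open MvPolynomial Filter Set Topology

section LineInSublevel

variable {E : Type*} [AddCommGroup E] [Module ℝ E] {β : Type*} [LinearOrder β] {f : E → β}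

theorem QuasiconvexOn.le_max_add_sub (hf : QuasiconvexOn ℝ univ f) (x y : E) :
    f x ≤ max (f (x + y)) (f (x - y)) := by
  have hmid := (quasiconvexOn_iff_le_max.1 hf).2 (mem_univ (x + y)) (mem_univ (x - y))
    (by norm_num : (0 : ℝ) ≤ 1 / 2) (by norm_num : (0 : ℝ) ≤ 1 / 2) (by norm_num)
  rwa [← smul_add, add_add_sub_cancel, ← two_smul ℝ x, smul_smul, one_div,
    inv_mul_cancel₀ two_ne_zero, one_smul] at hmid

variable [TopologicalSpace E] [IsTopologicalAddGroup E] [ContinuousSMul ℝ E]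

theorem Convex.add_smul_mem_of_forall_add_smul_mem {s : Set E} (hs : Convex ℝ s)
    (hsc : IsClosed s) {x a b : E} (hx : x ∈ s) (hline : ∀ t : ℝ, a + t • b ∈ s) (μ : ℝ) :
    x + μ • b ∈ s := by
  have hcurve : Tendsto (fun t : ℝ => x + μ • b + t • (a - x)) (𝓝[>] 0) (𝓝 (x + μ • b)) := by
    have hcont : Continuous fun t : ℝ => x + μ • b + t • (a - x) := by fun_prop
    simpa using (hcont.tendsto 0).mono_left nhdsWithin_le_nhds
  refine hsc.mem_of_tendsto hcurve ?_
  filter_upwards [Ioc_mem_nhdsGT one_pos] with t ⟨ht0, ht1⟩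
  convert hs hx (hline (μ / t)) (sub_nonneg.2 ht1) ht0.le (sub_add_cancel 1 t) using 1
  rw [smul_add, smul_smul, mul_div_cancel₀ _ ht0.ne', sub_smul, one_smul, smul_sub]
  abel

theorem QuasiconvexOn.le_max_of_forall_add_smul_le [TopologicalSpace β] [OrderTopology β]
    (hf : QuasiconvexOn ℝ univ f) (hlsc : LowerSemicontinuous f) {a b : E} {c : β}
    (hline : ∀ t : ℝ, f (a + t • b) ≤ c) (x : E) (μ : ℝ) : f (x + μ • b) ≤ max (f x) c := by
  have hconv : Convex ℝ (f ⁻¹' Iic (max (f x) c)) := by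
    have h := hf (max (f x) c)
    rwa [sep_univ] at h
  exact hconv.add_smul_mem_of_forall_add_smul_mem (hlsc.isClosed_preimage _) (le_max_left _ _)
    (fun t => (hline t).trans (le_max_right _ _)) μ

end LineInSublevel

theorem MvPolynomial.eval_add_smul_eq_eval_aeval {σ R : Type*} [CommSemiring R]
    (F : MvPolynomial σ R) (x b : σ → R) (l : R) :
    eval (x + l • b) F =
      (aeval (fun i => Polynomial.C (x i) + Polynomial.C (b i) * Polynomial.X) F).eval l := by
  rw [← Polynomial.coe_aeval_eq_eval, comp_aeval_apply, aeval_eq_eval]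
  congr 2
  funext i
  simp only [Pi.add_apply, Pi.smul_apply, smul_eq_mul, Polynomial.coe_aeval_eq_eval,
    Polynomial.eval_add, Polynomial.eval_C, Polynomial.eval_mul, Polynomial.eval_X]
  ring

theorem Polynomial.degree_nonpos_of_bddAbove_of_le_max {p : Polynomial ℝ}
    (hbdd : BddAbove (range fun l => p.eval l))
    (hmid : ∀ T : ℝ, p.eval 0 ≤ max (p.eval T) (p.eval (-T))) : p.degree ≤ 0 := by
  by_contra! hdeg
  obtain ⟨C, hC⟩ := hbdd
  set K := max C |p.eval 0|
  -- since `p ≤ C`, a value of absolute value above `C` is negative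
  have hlt : ∀ l, K < |p.eval l| → p.eval l < p.eval 0 := by
    intro l hl
    have hle : p.eval l ≤ C := hC (mem_range_self l)
    rw [max_lt_iff] at hl
    cases abs_cases (p.eval l) <;> linarith [neg_abs_le (p.eval 0)]
  obtain ⟨T, hT, hT'⟩ := ((p.abs_tendsto_atTop hdeg).eventually_gt_atTop K |>.and
    (((p.abs_tendsto_atBot hdeg).comp tendsto_neg_atTop_atBot).eventually_gt_atTop K)).exists
  exact (hmid T).not_gt (max_lt (hlt T hT) (hlt (-T) hT'))

theorem stmt2_general {n : ℕ} (F : MvPolynomial (Fin n) ℝ)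
    (hq : ∀ α : ℝ, Convex ℝ {x : Fin n → ℝ | eval x F ≤ α})
    (a b : Fin n → ℝ)
    (hconst : ∀ l₁ l₂ : ℝ, eval (a + l₁ • b) F = eval (a + l₂ • b) F) :
    ∀ x : Fin n → ℝ, ∀ l₁ l₂ : ℝ, eval (x + l₁ • b) F = eval (x + l₂ • b) F := by
  intro x l₁ l₂
  have hqc : QuasiconvexOn ℝ univ fun y => eval y F := fun r => by simpa only [sep_univ] using hq r
  set p := aeval (fun i => Polynomial.C (x i) + Polynomial.C (b i) * Polynomial.X) F
  have hp : ∀ l, eval (x + l • b) F = p.eval l := eval_add_smul_eq_eval_aeval F x b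
  have hbdd : BddAbove (range fun l => p.eval l) := by
    refine ⟨max (eval x F) (eval a F), forall_mem_range.2 fun l => ?_⟩
    rw [← hp]
    exact hqc.le_max_of_forall_add_smul_le (continuous_eval F).lowerSemicontinuous
      (fun t => ((hconst t 0).trans (by simp)).le) x l
  have hmid : ∀ T : ℝ, p.eval 0 ≤ max (p.eval T) (p.eval (-T)) := fun T => by
    simpa only [← hp, zero_smul, add_zero, neg_smul, ← sub_eq_add_neg] using
      hqc.le_max_add_sub x (T • b)
  rw [hp, hp, Polynomial.eq_C_of_degree_le_zero
    (Polynomial.degree_nonpos_of_bddAbove_of_le_max hbdd hmid)]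
  simp

theorem stmt2 {n : ℕ} (F : MvPolynomial (Fin n) ℝ)
    (hq : ∀ α : ℝ, Convex ℝ {x : Fin n → ℝ | eval x F ≤ α})
    (a b : Fin n → ℝ) (hb : b ≠ 0)
    (hconst : ∀ l₁ l₂ : ℝ, eval (a + l₁ • b) F = eval (a + l₂ • b) F) :
    ∀ x : Fin n → ℝ, ∀ l₁ l₂ : ℝ, eval (x + l₁ • b) F = eval (x + l₂ • b) F :=
  stmt2_general F hq a b hconst
end

section
/- Let F ∈ R[x₁,…,xₙ] be a quasiconvex polynomial of total degree at most d, let a ∈ R^n, and let {b₁,…,bₙ} be a basis of R^n. If for every i = 1,…,n there exist d pairwise distinct real numbers λ_{i1},…,λ_{id} such that ∇F(a + λ_{ij} bᵢ) = 0 for all j = 1,…,d, then F is a constant polynomial. -/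
/-!
Along each line `a + t • B i` the restriction of `F` is a polynomial of degree at most `d` whose
derivative, of degree less than `d`, has `d` distinct zeros; so `F` equals `F a` on these lines.
Every point is a convex combination of points of these lines, hence by quasiconvexity `a` is a
global maximum of `F`. A real polynomial that is bounded above and nonconstant on some line tends
to `-∞` at both ends of it, so one of its sublevel sets would miss a point between two of its
points; thus `F` is constant.
-/

theorem Polynomial.derivative_eq_zero_of_natDegree_le_card {R : Type*} [CommRing R] [IsDomain R]
    {p : Polynomial R} {ι : Type*} [Fintype ι] (hp : p.natDegree ≤ Fintype.card ι)
    {x : ι → R} (hx : Function.Injective x) (hroots : ∀ i, (derivative p).eval (x i) = 0) :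
    derivative p = 0 := by
  by_cases h0 : p.natDegree = 0
  · exact derivative_of_natDegree_zero h0
  · exact eq_zero_of_natDegree_lt_card_of_eval_eq_zero _ hx hroots
      ((natDegree_derivative_lt h0).trans_le hp)

open Set Filter

theorem Convex.eq_univ_of_add_smul_basis_mem {ι E : Type*} [Fintype ι] [AddCommGroup E]
    [Module ℝ E] {s : Set E} (hs : Convex ℝ s) (B : Module.Basis ι ℝ E) {a : E} (ha : a ∈ s)
    (hline : ∀ i (t : ℝ), a + t • B i ∈ s) : s = univ := by
  refine eq_univ_of_forall fun x ↦ ?_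
  rcases isEmpty_or_nonempty ι with hι | hι
  · have : x - a = 0 := by simpa using (B.sum_repr (x - a)).symm
    rwa [sub_eq_zero.1 this]
  set m : ℝ := (Fintype.card ι : ℝ)
  have hm : m ≠ 0 := Nat.cast_ne_zero.2 Fintype.card_ne_zero
  -- `x` is the barycentre of the points `a + (m * c i) • B i`, `c` the coordinates of `x - a`.
  have hx : ∑ i, m⁻¹ • (a + (m * B.repr (x - a) i) • B i) = x := by
    simp only [smul_add, smul_smul, inv_mul_cancel_left₀ hm, Finset.sum_add_distrib,
      Finset.sum_const, Finset.card_univ, B.sum_repr]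
    rw [← Nat.cast_smul_eq_nsmul ℝ, smul_smul, mul_inv_cancel₀ hm, one_smul, add_sub_cancel]
  rw [← hx]
  exact hs.sum_mem (fun _ _ ↦ inv_nonneg.2 (Nat.cast_nonneg _))
    (by simp only [Finset.sum_const, Finset.card_univ, nsmul_eq_mul]; exact mul_inv_cancel₀ hm)
    fun i _ ↦ hline i _

namespace Polynomial

theorem tendsto_atBot_of_bddAbove {P : Polynomial ℝ} (hdeg : 0 < P.degree)
    (hP : BddAbove (range fun t ↦ P.eval t)) : Tendsto (fun t ↦ P.eval t) atTop atBot := by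
  refine tendsto_atBot_of_leadingCoeff_nonpos P hdeg (not_lt.1 fun hpos ↦ ?_)
  obtain ⟨M, hM⟩ := hP
  obtain ⟨t, ht⟩ :=
    ((tendsto_atTop_of_leadingCoeff_nonneg P hdeg hpos.le).eventually_gt_atTop M).exists
  exact (hM (mem_range_self t)).not_gt ht

theorem degree_nonpos_of_bddAbove_of_quasiconvexOn {P : Polynomial ℝ}
    (hP : BddAbove (range fun t ↦ P.eval t)) (hq : QuasiconvexOn ℝ univ fun t ↦ P.eval t) :
    P.degree ≤ 0 := by
  by_contra! hdeg
  have hright := tendsto_atBot_of_bddAbove hdeg hP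
  have hleft : Tendsto (fun t ↦ P.eval (-t)) atTop atBot := by
    refine tendsto_atBot_of_bddAbove (P := P.comp (-X)) ?_ ?_ |>.congr fun t ↦ by simp
    · rw [← natDegree_pos_iff_degree_pos] at hdeg ⊢
      simpa [natDegree_comp] using hdeg
    · exact hP.mono (by rintro _ ⟨t, rfl⟩; exact ⟨-t, by simp⟩)
  obtain ⟨u, hu, hu0⟩ :=
    ((hright.eventually_le_atBot (P.eval 0 - 1)).and (eventually_gt_atTop 0)).exists
  obtain ⟨s, hs, hs0⟩ :=
    ((hleft.eventually_le_atBot (P.eval 0 - 1)).and (eventually_gt_atTop 0)).exists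
  have h0 := ((hq (P.eval 0 - 1)).ordConnected.out ⟨mem_univ _, hs⟩ ⟨mem_univ u, hu⟩
    ⟨by linarith, hu0.le⟩).2
  linarith

end Polynomial

theorem QuasiconvexOn.comp_add_smul {𝕜 E β : Type*} [Semiring 𝕜] [PartialOrder 𝕜]
    [AddCommMonoid E] [Module 𝕜 E] [LinearOrder β] {f : E → β} (hf : QuasiconvexOn 𝕜 univ f)
    (x v : E) : QuasiconvexOn 𝕜 univ fun t : 𝕜 ↦ f (x + t • v) := by
  refine quasiconvexOn_iff_le_max.2 ⟨convex_univ, fun s _ t _ a b ha hb hab ↦ ?_⟩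
  have hline : x + (a • s + b • t) • v = a • (x + s • v) + b • (x + t • v) := by
    rw [smul_add, smul_add, add_add_add_comm, ← add_smul, hab, one_smul, add_smul, smul_smul,
      smul_smul, smul_eq_mul, smul_eq_mul]
  rw [hline]
  exact (quasiconvexOn_iff_le_max.1 hf).2 (mem_univ _) (mem_univ _) ha hb hab

open MvPolynomial

namespace MvPolynomial

variable {σ R : Type*} [CommRing R]

noncomputable def lineRestrict (a v : σ → R) : MvPolynomial σ R →ₐ[R] Polynomial R :=
  aeval fun k ↦ Polynomial.C (v k) * Polynomial.X + Polynomial.C (a k)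

@[simp]
theorem lineRestrict_X (a v : σ → R) (k : σ) :
    lineRestrict a v (X k) = Polynomial.C (v k) * Polynomial.X + Polynomial.C (a k) :=
  aeval_X _ k

theorem eval_lineRestrict (a v : σ → R) (F : MvPolynomial σ R) (t : R) :
    (lineRestrict a v F).eval t = eval (a + t • v) F := by
  induction F using MvPolynomial.induction_on with
  | C c => simp
  | add p q hp hq => simp [hp, hq]
  | mul_X p i hp => simp [hp, mul_comm t, add_comm (a i)]

theorem natDegree_lineRestrict_le (a v : σ → R) (F : MvPolynomial σ R) :
    (lineRestrict a v F).natDegree ≤ F.totalDegree := by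
  rw [lineRestrict, aeval_def, eval₂_eq]
  refine Polynomial.natDegree_sum_le_of_forall_le _ _ fun m hm ↦ ?_
  refine (Polynomial.natDegree_C_mul_le _ _).trans ((Polynomial.natDegree_prod_le _ _).trans ?_)
  calc _ ≤ ∑ k ∈ m.support, m k * 1 :=
        Finset.sum_le_sum fun _ _ ↦
          Polynomial.natDegree_pow_le_of_le _ Polynomial.natDegree_linear_le
    _ ≤ F.totalDegree := by simpa [Finsupp.sum] using le_totalDegree hm

theorem derivative_lineRestrict [Fintype σ] (a v : σ → R) (F : MvPolynomial σ R) :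
    Polynomial.derivative (lineRestrict a v F) =
      ∑ k, Polynomial.C (v k) * lineRestrict a v (pderiv k F) := by
  classical
  induction F using MvPolynomial.induction_on with
  | C c => simp
  | add p q hp hq => simp [hp, hq, Finset.sum_add_distrib, mul_add]
  | mul_X p i hp =>
    have hsum : ∑ k, Polynomial.C (v k) * lineRestrict a v (pderiv k (p * X i)) =
        lineRestrict a v (X i) * ∑ k, Polynomial.C (v k) * lineRestrict a v (pderiv k p) +
          Polynomial.C (v i) * lineRestrict a v p := by
      simp only [Derivation.leibniz, pderiv_X, smul_eq_mul, map_add, map_mul, mul_one,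
        Pi.single_apply, apply_ite, map_zero, mul_add, Finset.sum_add_distrib, mul_zero,
        Finset.sum_ite_eq, Finset.mem_univ, if_true, Finset.mul_sum, mul_left_comm (Polynomial.C _)]
      ring
    rw [hsum, map_mul, Polynomial.derivative_mul, hp]
    simp only [lineRestrict_X, Polynomial.derivative_add, Polynomial.derivative_C_mul_X,
      Polynomial.derivative_C, add_zero]
    ring

theorem eval_add_smul_eq_of_pderiv_eval_eq_zero [IsDomain R] [CharZero R] [Fintype σ]
    {F : MvPolynomial σ R} {ι : Type*} [Fintype ι]
    (hF : F.totalDegree ≤ Fintype.card ι) {a v : σ → R} {μ : ι → R} (hμ : Function.Injective μ)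
    (hgrad : ∀ j k, eval (a + μ j • v) (pderiv k F) = 0) (t : R) :
    eval (a + t • v) F = eval a F := by
  have hder : Polynomial.derivative (lineRestrict a v F) = 0 :=
    Polynomial.derivative_eq_zero_of_natDegree_le_card
      ((natDegree_lineRestrict_le a v F).trans hF) hμ fun j ↦ by
        simp [derivative_lineRestrict, Polynomial.eval_finsetSum, eval_lineRestrict, hgrad]
  have hconst := Polynomial.eq_C_of_derivative_eq_zero hder
  calc eval (a + t • v) F = (lineRestrict a v F).eval t := (eval_lineRestrict a v F t).symm
    _ = (lineRestrict a v F).eval 0 := by rw [hconst, Polynomial.eval_C, Polynomial.eval_C]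
    _ = eval a F := by simp [eval_lineRestrict]

theorem eq_C_of_bddAbove_of_quasiconvexOn {F : MvPolynomial σ ℝ}
    (hb : BddAbove (range fun x ↦ eval x F)) (hq : QuasiconvexOn ℝ univ fun x ↦ eval x F) :
    F = C (eval 0 F) := by
  refine MvPolynomial.funext fun x ↦ ?_
  set P := lineRestrict 0 x F
  have hP : ∀ t, P.eval t = eval (t • x) F := by simp [P, eval_lineRestrict]
  have hdeg : P.degree ≤ 0 := Polynomial.degree_nonpos_of_bddAbove_of_quasiconvexOn
    (hb.mono (by rintro _ ⟨t, rfl⟩; exact ⟨t • x, (hP t).symm⟩))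
    (by simpa only [hP, zero_add] using hq.comp_add_smul 0 x)
  calc eval x F = P.eval 1 := by simp [hP]
    _ = P.eval 0 := by rw [Polynomial.eq_C_of_degree_le_zero hdeg]; simp
    _ = eval (0 : σ → ℝ) F := by simp [hP]
    _ = eval x (C (eval 0 F)) := (eval_C _).symm

end MvPolynomial

theorem stmt4 {n d : ℕ} (F : MvPolynomial (Fin n) ℝ) (hd : F.totalDegree ≤ d)
    (hq : ∀ α : ℝ, Convex ℝ {x : Fin n → ℝ | eval x F ≤ α})
    (a : Fin n → ℝ) (B : Module.Basis (Fin n) ℝ (Fin n → ℝ))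
    (Λ : Fin n → Fin d → ℝ) (hΛ : ∀ i, Function.Injective (Λ i))
    (hgrad : ∀ (i : Fin n) (j : Fin d) (k : Fin n),
      eval (a + Λ i j • B i) (pderiv k F) = 0) :
    ∃ c : ℝ, F = C c := by
  have hline : ∀ i (t : ℝ), eval (a + t • B i) F = eval a F := fun i ↦
    eval_add_smul_eq_of_pderiv_eval_eq_zero (by simpa using hd) (hΛ i) (hgrad i)
  have hmax : ∀ x, eval x F ≤ eval a F := eq_univ_iff_forall.1 <|
    (hq (eval a F)).eq_univ_of_add_smul_basis_mem B (le_refl (eval a F)) fun i t ↦ (hline i t).le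
  refine ⟨_, eq_C_of_bddAbove_of_quasiconvexOn ⟨eval a F, forall_mem_range.2 hmax⟩ fun r ↦ ?_⟩
  simpa only [mem_univ, true_and] using hq r
end

section
/- Assume Banaszczyk's transference bound λ(Λ)·μ(Λ*) ≤ n/2 for every full-rank lattice Λ ⊂ R^n with dual Λ*. Then for any symmetric positive definite A ∈ R^{n×n} and a ∈ R^n: if the ellipsoid E(A,a) contains no point of Z^n, then its lattice width w(E(A,a)) is at most n. -/
open Matrix

/-- The width of a set `K` along a direction `d`. -/
noncomputable def width {n : ℕ} (K : Set (Fin n → ℝ)) (d : Fin n → ℝ) : ℝ :=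
  sSup ((fun x => d ⬝ᵥ x) '' K) - sInf ((fun x => d ⬝ᵥ x) '' K)

/-- The ellipsoid `E(A,a) = {x : (x-a)ᵀ A⁻¹ (x-a) ≤ 1}`. -/
noncomputable def ell {n : ℕ} (A : Matrix (Fin n) (Fin n) ℝ) (a : Fin n → ℝ) :
    Set (Fin n → ℝ) :=
  {x | (x - a) ⬝ᵥ (A⁻¹ *ᵥ (x - a)) ≤ 1}

/-- The lattice width of a set: the infimum of widths along nonzero integer directions. -/
noncomputable def latwidth {n : ℕ} (K : Set (Fin n → ℝ)) : ℝ :=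
  sInf {r | ∃ d : Fin n → ℤ, d ≠ 0 ∧ r = width K fun i => (d i : ℝ)}

/-- The length of a shortest nonzero vector of the lattice generated by the columns of `B`. -/
noncomputable def shortestVec {n : ℕ} (B : Matrix (Fin n) (Fin n) ℝ) : ℝ :=
  sInf {r | ∃ z : Fin n → ℤ, z ≠ 0 ∧
    r = Real.sqrt ((B *ᵥ fun i => (z i : ℝ)) ⬝ᵥ (B *ᵥ fun i => (z i : ℝ)))}

/-- The covering radius of the lattice generated by the columns of `B`. -/
noncomputable def covRad {n : ℕ} (B : Matrix (Fin n) (Fin n) ℝ) : ℝ :=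
  sInf {r | 0 < r ∧ ∀ x : Fin n → ℝ, ∃ z : Fin n → ℤ,
    Real.sqrt ((x - B *ᵥ fun i => (z i : ℝ)) ⬝ᵥ (x - B *ᵥ fun i => (z i : ℝ))) ≤ r}

/-!
Write `A = S Sᵀ`. Then `E(A, a) = a + S·(unit ball)`, so its width along `d` is `2‖Sᵀ d‖` and
`w(E) ≤ 2 λ(Sᵀ ℤⁿ)`. The lattice `S⁻¹ ℤⁿ` is the dual of `Sᵀ ℤⁿ`, and `z ∈ E` iff
`‖S⁻¹ a - S⁻¹ z‖ ≤ 1`; so an ellipsoid without integer points puts `S⁻¹ a` at distance more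
than `1` from `S⁻¹ ℤⁿ`, i.e. `μ(S⁻¹ ℤⁿ) ≥ 1`. Banaszczyk's bound then gives
`w(E) ≤ 2 λ(Sᵀ ℤⁿ) ≤ 2 λ(Sᵀ ℤⁿ) μ(S⁻¹ ℤⁿ) ≤ n`.
-/

section LinearAlgebra

variable {ι : Type*} [Fintype ι]

theorem Matrix.PosSemidef.exists_eq_mul_transpose [DecidableEq ι] {A : Matrix ι ι ℝ}
    (hA : A.PosSemidef) : ∃ S : Matrix ι ι ℝ, A = S * Sᵀ := by
  open scoped MatrixOrder in
  obtain ⟨B, rfl⟩ := CStarAlgebra.nonneg_iff_eq_star_mul_self.mp hA.nonneg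
  exact ⟨Bᵀ, by simp [star_eq_conjTranspose]⟩

theorem abs_dotProduct_le_sqrt_mul_sqrt (u v : ι → ℝ) :
    |u ⬝ᵥ v| ≤ √(u ⬝ᵥ u) * √(v ⬝ᵥ v) := by
  have hcs : (u ⬝ᵥ v) ^ 2 ≤ (u ⬝ᵥ u) * (v ⬝ᵥ v) := by
    simpa [dotProduct, sq] using Finset.sum_mul_sq_le_sq_mul_sq Finset.univ u v
  have hu : 0 ≤ u ⬝ᵥ u := Finset.sum_nonneg fun i _ => mul_self_nonneg (u i)
  rw [← Real.sqrt_sq_eq_abs, ← Real.sqrt_mul hu]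
  exact Real.sqrt_le_sqrt hcs

theorem dotProduct_inv_mul_transpose_mulVec [DecidableEq ι] (S : Matrix ι ι ℝ) (w : ι → ℝ) :
    w ⬝ᵥ ((S * Sᵀ)⁻¹ *ᵥ w) = (S⁻¹ *ᵥ w) ⬝ᵥ (S⁻¹ *ᵥ w) := by
  rw [Matrix.mul_inv_rev, ← transpose_nonsing_inv, ← mulVec_mulVec, dotProduct_mulVec,
    vecMul_transpose, dotProduct_comm]

theorem mulVec_dotProduct_self_le (M : Matrix ι ι ℝ) (w : ι → ℝ) :
    (M *ᵥ w) ⬝ᵥ (M *ᵥ w) ≤ (∑ i, ∑ j, M i j ^ 2) * (w ⬝ᵥ w) := by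
  simp only [dotProduct, mulVec, ← sq]
  rw [Finset.sum_mul]
  exact Finset.sum_le_sum fun i _ => Finset.sum_mul_sq_le_sq_mul_sq Finset.univ (M i) w

theorem sub_round_dotProduct_self_le (v : ι → ℝ) :
    (v - fun i => (round (v i) : ℝ)) ⬝ᵥ (v - fun i => (round (v i) : ℝ)) ≤ Fintype.card ι := by
  have hterm : ∀ i, (v i - round (v i)) * (v i - round (v i)) ≤ 1 := fun i => by
    nlinarith [abs_sub_round (v i), abs_mul_abs_self (v i - round (v i)),
      abs_nonneg (v i - round (v i))]
  simpa [dotProduct] using Finset.sum_le_sum fun i (_ : i ∈ Finset.univ) => hterm i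

end LinearAlgebra

variable {n : ℕ}

section Width

variable {K : Set (Fin n → ℝ)} {d : Fin n → ℝ} {l u : ℝ}

theorem width_nonneg_of_mapsTo (hK : K.Nonempty) (h : Set.MapsTo (d ⬝ᵥ ·) K (Set.Icc l u)) :
    0 ≤ width K d := by
  have hne : ((d ⬝ᵥ ·) '' K).Nonempty := hK.image _
  exact sub_nonneg.mpr <| csInf_le_csSup hne ⟨l, fun _ ⟨x, hx, hy⟩ => hy ▸ (h hx).1⟩
    ⟨u, fun _ ⟨x, hx, hy⟩ => hy ▸ (h hx).2⟩

theorem width_le_of_mapsTo (hK : K.Nonempty) (h : Set.MapsTo (d ⬝ᵥ ·) K (Set.Icc l u)) :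
    width K d ≤ u - l := by
  have hne : ((d ⬝ᵥ ·) '' K).Nonempty := hK.image _
  have hsup : sSup ((d ⬝ᵥ ·) '' K) ≤ u := csSup_le hne fun _ ⟨x, hx, hy⟩ => hy ▸ (h hx).2
  have hinf : l ≤ sInf ((d ⬝ᵥ ·) '' K) := le_csInf hne fun _ ⟨x, hx, hy⟩ => hy ▸ (h hx).1
  unfold width
  linarith

end Width

section Ellipsoid

variable {S : Matrix (Fin n) (Fin n) ℝ} {a : Fin n → ℝ}

theorem center_mem_ell (A : Matrix (Fin n) (Fin n) ℝ) (a : Fin n → ℝ) : a ∈ ell A a := by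
  simp [ell]

theorem abs_dotProduct_sub_le_of_mem_ell (hS : IsUnit S.det) {x : Fin n → ℝ}
    (hx : x ∈ ell (S * Sᵀ) a) (d : Fin n → ℝ) :
    |d ⬝ᵥ x - d ⬝ᵥ a| ≤ √((Sᵀ *ᵥ d) ⬝ᵥ (Sᵀ *ᵥ d)) := by
  set w := S⁻¹ *ᵥ (x - a)
  have hw : √(w ⬝ᵥ w) ≤ 1 := by
    rw [Real.sqrt_le_one, ← dotProduct_inv_mul_transpose_mulVec]
    exact hx
  have hdw : d ⬝ᵥ x - d ⬝ᵥ a = (Sᵀ *ᵥ d) ⬝ᵥ w := by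
    rw [← dotProduct_sub, mulVec_transpose, ← dotProduct_mulVec, mulVec_mulVec,
      mul_nonsing_inv S hS, one_mulVec]
  rw [hdw]
  calc |(Sᵀ *ᵥ d) ⬝ᵥ w| ≤ √((Sᵀ *ᵥ d) ⬝ᵥ (Sᵀ *ᵥ d)) * √(w ⬝ᵥ w) :=
        abs_dotProduct_le_sqrt_mul_sqrt _ _
    _ ≤ √((Sᵀ *ᵥ d) ⬝ᵥ (Sᵀ *ᵥ d)) := mul_le_of_le_one_right (Real.sqrt_nonneg _) hw

theorem mapsTo_ell_Icc (hS : IsUnit S.det) (d : Fin n → ℝ) :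
    Set.MapsTo (d ⬝ᵥ ·) (ell (S * Sᵀ) a)
      (Set.Icc (d ⬝ᵥ a - √((Sᵀ *ᵥ d) ⬝ᵥ (Sᵀ *ᵥ d))) (d ⬝ᵥ a + √((Sᵀ *ᵥ d) ⬝ᵥ (Sᵀ *ᵥ d)))) :=
  fun _ hx => by
    have := abs_le.mp (abs_dotProduct_sub_le_of_mem_ell hS hx d)
    constructor <;> linarith

theorem latwidth_ell_le_two_mul_shortestVec [NeZero n] (hS : IsUnit S.det) :
    latwidth (ell (S * Sᵀ) a) ≤ 2 * shortestVec Sᵀ := by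
  have hK : (ell (S * Sᵀ) a).Nonempty := ⟨a, center_mem_ell _ a⟩
  have hbdd : BddBelow {r | ∃ d : Fin n → ℤ, d ≠ 0 ∧
      r = width (ell (S * Sᵀ) a) fun i => (d i : ℝ)} :=
    ⟨0, by rintro _ ⟨d, -, rfl⟩; exact width_nonneg_of_mapsTo hK (mapsTo_ell_Icc hS _)⟩
  rw [← div_le_iff₀' two_pos]
  refine le_csInf ⟨_, 1, one_ne_zero, rfl⟩ ?_
  rintro _ ⟨z, hz, rfl⟩
  rw [div_le_iff₀' two_pos]
  calc latwidth (ell (S * Sᵀ) a) ≤ width (ell (S * Sᵀ) a) fun i => (z i : ℝ) :=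
        csInf_le hbdd ⟨z, hz, rfl⟩
    _ ≤ _ := (width_le_of_mapsTo hK (mapsTo_ell_Icc hS _)).trans_eq (by ring)

end Ellipsoid

section Lattice

variable {B : Matrix (Fin n) (Fin n) ℝ}

theorem shortestVec_nonneg (B : Matrix (Fin n) (Fin n) ℝ) : 0 ≤ shortestVec B :=
  Real.sInf_nonneg (by rintro _ ⟨z, -, rfl⟩; exact Real.sqrt_nonneg _)

/-- Rounding the coordinates of `B⁻¹ x` gives a lattice point within `√(n ‖B‖_F²)` of `x`. -/
theorem exists_covering_radius (hB : IsUnit B.det) :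
    ∃ r, 0 < r ∧ ∀ x : Fin n → ℝ, ∃ z : Fin n → ℤ,
      √((x - B *ᵥ fun i => (z i : ℝ)) ⬝ᵥ (x - B *ᵥ fun i => (z i : ℝ))) ≤ r := by
  set F := ∑ i, ∑ j, B i j ^ 2
  refine ⟨√(F * n) + 1, by positivity, fun x => ⟨fun i => round ((B⁻¹ *ᵥ x) i), ?_⟩⟩
  set v := B⁻¹ *ᵥ x
  have hx : x - B *ᵥ (fun i => (round (v i) : ℝ)) = B *ᵥ (v - fun i => (round (v i) : ℝ)) := by
    rw [mulVec_sub, mulVec_mulVec, mul_nonsing_inv B hB, one_mulVec]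
  have hbound := (mulVec_dotProduct_self_le B (v - fun i => (round (v i) : ℝ))).trans
    (mul_le_mul_of_nonneg_left (sub_round_dotProduct_self_le v) (by positivity))
  rw [Fintype.card_fin, ← hx] at hbound
  linarith [Real.sqrt_le_sqrt hbound]

theorem le_covRad (hB : IsUnit B.det) {c : ℝ} (x : Fin n → ℝ)
    (hx : ∀ z : Fin n → ℤ, c ≤ √((x - B *ᵥ fun i => (z i : ℝ)) ⬝ᵥ (x - B *ᵥ fun i => (z i : ℝ)))) :
    c ≤ covRad B := by
  obtain ⟨r, hr⟩ := exists_covering_radius hB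
  refine le_csInf ⟨r, hr⟩ ?_
  rintro _ ⟨-, hcover⟩
  obtain ⟨z, hz⟩ := hcover x
  exact (hx z).trans hz

theorem one_le_covRad_inv_of_forall_notMem_ell {S : Matrix (Fin n) (Fin n) ℝ} {a : Fin n → ℝ}
    (hS : IsUnit S.det) (hempty : ∀ z : Fin n → ℤ, (fun i => (z i : ℝ)) ∉ ell (S * Sᵀ) a) :
    1 ≤ covRad S⁻¹ := by
  refine le_covRad (isUnit_nonsing_inv_det S hS) (S⁻¹ *ᵥ a) fun z => ?_
  have hfar := not_le.mp (Set.notMem_ofPred_iff.mp (hempty z))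
  rw [dotProduct_inv_mul_transpose_mulVec, mulVec_sub,
    ← neg_sub (S⁻¹ *ᵥ a), neg_dotProduct_neg] at hfar
  rw [← Real.sqrt_one]
  exact Real.sqrt_le_sqrt hfar.le

end Lattice

theorem stmt8 {n : ℕ}
    (hban : ∀ B : Matrix (Fin n) (Fin n) ℝ, B.det ≠ 0 →
      shortestVec B * covRad (B⁻¹)ᵀ ≤ (n : ℝ) / 2)
    (A : Matrix (Fin n) (Fin n) ℝ) (hA : A.PosDef) (a : Fin n → ℝ)
    (hempty : ∀ z : Fin n → ℤ, (fun i => (z i : ℝ)) ∉ ell A a) :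
    latwidth (ell A a) ≤ n := by
  rcases Nat.eq_zero_or_pos n with rfl | hn
  · exact (hempty 0 (by simp [ell, dotProduct])).elim
  have : NeZero n := ⟨hn.ne'⟩
  obtain ⟨S, rfl⟩ := hA.posSemidef.exists_eq_mul_transpose
  have hS : IsUnit S.det :=
    (isUnit_iff_isUnit_det S).mp (isUnit_of_mul_isUnit_left hA.isUnit)
  have hcov : 1 ≤ covRad S⁻¹ := one_le_covRad_inv_of_forall_notMem_ell hS hempty
  have hbanS := hban Sᵀ (by simpa using hS.ne_zero)
  rw [transpose_nonsing_inv, transpose_transpose] at hbanS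
  calc latwidth (ell (S * Sᵀ) a) ≤ 2 * shortestVec Sᵀ := latwidth_ell_le_two_mul_shortestVec hS
    _ ≤ 2 * (shortestVec Sᵀ * covRad S⁻¹) := by
        gcongr; exact le_mul_of_one_le_right (shortestVec_nonneg _) hcov
    _ ≤ n := by linarith
end

section
/- Let A be symmetric positive definite with positive definite square root A^{1/2}, let Λ = L((A^{1/2})ᵀ) and Λ* = L(A^{-1/2}). If the ellipsoid E(A,a) contains an integer point, then the point x* = A^{1/2} z, where z is a closest vector in Λ* to the target A^{-1/2} a, is an integer point contained in E(A,a). -/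
open Matrix

/-- The old Mathlib `Matrix.PosSemidef.sqrt` (removed since), with its original definition. -/
noncomputable def PosSemidef.sqrtOld {n : ℕ} {A : Matrix (Fin n) (Fin n) ℝ} (hA : A.PosSemidef) :
    Matrix (Fin n) (Fin n) ℝ :=
  hA.1.eigenvectorUnitary.1 * diagonal ((↑) ∘ (√·) ∘ hA.1.eigenvalues) *
    (star hA.1.eigenvectorUnitary : Matrix (Fin n) (Fin n) ℝ)

/-!
Write `S = A^{1/2}`, which is symmetric with `S * S = A`. Then
`(x - a)ᵀ A⁻¹ (x - a) = ‖S⁻¹ x - S⁻¹ a‖²`, so `S⁻¹` maps `E(A,a)` onto the closed unit ball around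
`S⁻¹ a` and maps the integer points onto the lattice `Λ* = S⁻¹ ℤⁿ`. An integer point of `E(A,a)`
thus yields a point of `Λ*` within distance `1` of `S⁻¹ a`; the closest vector `z` is at least as
close, and `S z` is an integer point of `E(A,a)`.
-/

namespace PosSemidef

variable {n : ℕ} {A : Matrix (Fin n) (Fin n) ℝ}

theorem sqrtOld_mul_self (hA : A.PosSemidef) : sqrtOld hA * sqrtOld hA = A := by
  have hU : (star hA.1.eigenvectorUnitary : Matrix (Fin n) (Fin n) ℝ) *
      hA.1.eigenvectorUnitary.1 = 1 := Unitary.coe_star_mul_self _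
  have hspectral := hA.1.spectral_theorem
  rw [Unitary.conjStarAlgAut_apply] at hspectral
  conv_rhs => rw [hspectral]
  simp only [sqrtOld, Matrix.mul_assoc]
  rw [← Matrix.mul_assoc _ hA.1.eigenvectorUnitary.1, hU, Matrix.one_mul,
    ← Matrix.mul_assoc (diagonal _), diagonal_mul_diagonal]
  congr 3
  funext i
  simp [Real.mul_self_sqrt (hA.eigenvalues_nonneg i)]

theorem isSymm_sqrtOld (hA : A.PosSemidef) : (sqrtOld hA).IsSymm := by
  have hherm : (sqrtOld hA).IsHermitian :=
    isHermitian_mul_mul_conjTranspose _ (isHermitian_diagonal _)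
  rw [IsSymm, ← conjTranspose_eq_transpose_of_trivial, hherm.eq]

end PosSemidef

theorem Matrix.IsSymm.dotProduct_mul_self_inv_mulVec {ι R : Type*} [Fintype ι] [DecidableEq ι]
    [CommRing R] {S : Matrix ι ι R} (hS : S.IsSymm) (u : ι → R) :
    u ⬝ᵥ ((S * S)⁻¹ *ᵥ u) = (S⁻¹ *ᵥ u) ⬝ᵥ (S⁻¹ *ᵥ u) := by
  rw [Matrix.mul_inv_rev, ← mulVec_mulVec, dotProduct_mulVec, ← mulVec_transpose, hS.inv.eq]

theorem mem_ell_iff_of_mul_self {n : ℕ} {A S : Matrix (Fin n) (Fin n) ℝ} (hS : S.IsSymm)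
    (hSA : S * S = A) (a x : Fin n → ℝ) :
    x ∈ ell A a ↔ (S⁻¹ *ᵥ x - S⁻¹ *ᵥ a) ⬝ᵥ (S⁻¹ *ᵥ x - S⁻¹ *ᵥ a) ≤ 1 := by
  rw [ell, Set.mem_ofPred_eq, ← hSA, hS.dotProduct_mul_self_inv_mulVec, mulVec_sub]

theorem stmt9 {n : ℕ} (A : Matrix (Fin n) (Fin n) ℝ) (hA : A.PosDef) (a : Fin n → ℝ)
    (S : Matrix (Fin n) (Fin n) ℝ) (hS : S = PosSemidef.sqrtOld hA.posSemidef)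
    (hexists : ∃ w : Fin n → ℤ, (fun i => (w i : ℝ)) ∈ ell A a)
    (z : Fin n → ℝ)
    (hzlat : ∃ m : Fin n → ℤ, z = S⁻¹ *ᵥ fun i => (m i : ℝ))
    (hclosest : ∀ v : Fin n → ℝ, (∃ m : Fin n → ℤ, v = S⁻¹ *ᵥ fun i => (m i : ℝ)) →
      Real.sqrt ((z - S⁻¹ *ᵥ a) ⬝ᵥ (z - S⁻¹ *ᵥ a))
        ≤ Real.sqrt ((v - S⁻¹ *ᵥ a) ⬝ᵥ (v - S⁻¹ *ᵥ a))) :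
    (∀ i, ∃ k : ℤ, (S *ᵥ z) i = (k : ℝ)) ∧ S *ᵥ z ∈ ell A a := by
  have hSA : S * S = A := hS ▸ PosSemidef.sqrtOld_mul_self hA.posSemidef
  have hSsymm : S.IsSymm := hS ▸ PosSemidef.isSymm_sqrtOld hA.posSemidef
  have hSdet : IsUnit S.det :=
    isUnit_of_mul_isUnit_left (by rw [← det_mul, hSA]; exact (isUnit_iff_isUnit_det A).1 hA.isUnit)
  obtain ⟨m, rfl⟩ := hzlat
  rw [mulVec_mulVec, mul_nonsing_inv S hSdet, one_mulVec]
  refine ⟨fun i => ⟨m i, rfl⟩, ?_⟩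
  obtain ⟨w, hw⟩ := hexists
  rw [mem_ell_iff_of_mul_self hSsymm hSA] at hw ⊢
  exact Real.sqrt_le_one.mp ((hclosest _ ⟨w, rfl⟩).trans (Real.sqrt_le_one.mpr hw))
end

section
/- Let V ⊂ R^n be a finite set of points on the unit sphere whose convex hull contains the ball B(ρ, 0) of radius ρ ≤ 1/4, and let τ : R^n → R^n be an invertible affine map with τ(E(A,a)) = B(1,0). If every point τ⁻¹(v/(n+σ)) for v ∈ V (σ ≥ 1) lies in a convex set Y ⊆ E(A,a), then E((1/β²)A, a) ⊆ Y ⊆ E(A,a) where β = (n+σ)/ρ; i.e., E(A,a) is a β-rounding of Y. -/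
/-!
Write `A = S S` with `S` the symmetric square root of `A`. Then `x ↦ S⁻¹ (x - a)` sends
`E(r² A, a)` into the ball of radius `r`, so every point of `E((ρ/(n+σ))² A, a)` has the form
`a + S (w/(n+σ))` with `‖w‖ ≤ ρ`. Such a `w` lies in `conv V`, and the affine map
`w ↦ a + S (w/(n+σ))` sends `V` into the convex set `Y`, hence all of `conv V`.
-/

open Matrix

/-- The positive semidefinite square root, as `Matrix.PosSemidef.sqrt` was defined in Mathlib
(December 2024); that definition has since been removed. -/
noncomputable def posSemidefSqrt {n : Type*} [Fintype n] [DecidableEq n]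
    {A : Matrix n n ℝ} (hA : A.PosSemidef) : Matrix n n ℝ :=
  hA.1.eigenvectorUnitary.1 * diagonal ((↑) ∘ (Real.sqrt ∘ hA.1.eigenvalues)) *
    (star hA.1.eigenvectorUnitary : Matrix n n ℝ)

section posSemidefSqrt

variable {m : Type*} [Fintype m] [DecidableEq m] {A : Matrix m m ℝ}

theorem transpose_posSemidefSqrt (hA : A.PosSemidef) :
    (posSemidefSqrt hA)ᵀ = posSemidefSqrt hA := by
  simp only [posSemidefSqrt, transpose_mul, diagonal_transpose, star_eq_conjTranspose,
    conjTranspose_eq_transpose_of_trivial, transpose_transpose,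
    Matrix.mul_assoc]

theorem posSemidefSqrt_mul_self (hA : A.PosSemidef) :
    posSemidefSqrt hA * posSemidefSqrt hA = A := by
  have hU := Unitary.coe_star_mul_self hA.1.eigenvectorUnitary
  have hspec := hA.1.spectral_theorem
  rw [Unitary.conjStarAlgAut_apply] at hspec
  simp only [posSemidefSqrt, Matrix.mul_assoc]
  rw [← Matrix.mul_assoc (star _ : Matrix m m ℝ), hU, Matrix.one_mul,
    ← Matrix.mul_assoc (diagonal _), diagonal_mul_diagonal]
  conv_rhs => rw [hspec, Matrix.mul_assoc]
  congr 3
  funext i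
  simp [Real.mul_self_sqrt (hA.eigenvalues_nonneg i)]

end posSemidefSqrt

theorem AffineMap.image_convexHull_subset {𝕜 E F : Type*} [Ring 𝕜] [PartialOrder 𝕜]
    [AddCommGroup E] [AddCommGroup F] [Module 𝕜 E] [Module 𝕜 F] (f : E →ᵃ[𝕜] F)
    {V : Set E} {Y : Set F} (hY : Convex 𝕜 Y) (hV : Set.MapsTo f V Y) :
    f '' convexHull 𝕜 V ⊆ Y := by
  rw [AffineMap.image_convexHull]
  exact convexHull_min hV.image_subset hY

theorem ell_sq_smul_subset_image_ball {n : ℕ} {A S : Matrix (Fin n) (Fin n) ℝ}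
    (hA : IsUnit A.det) (hS : Sᵀ = S) (hSS : S * S = A) (a : Fin n → ℝ) {r : ℝ} (hr : r ≠ 0) :
    ell (r ^ 2 • A) a ⊆ (a + S *ᵥ ·) '' {y | Real.sqrt (y ⬝ᵥ y) ≤ |r|} := by
  intro x hx
  have hSdet : IsUnit S.det := by
    rw [← hSS, det_mul] at hA
    exact isUnit_of_mul_isUnit_left hA
  set y := S⁻¹ *ᵥ (x - a)
  have hquad : (x - a) ⬝ᵥ (A⁻¹ *ᵥ (x - a)) = y ⬝ᵥ y := by
    have hSinv : (S⁻¹)ᵀ = S⁻¹ := by rw [transpose_nonsing_inv, hS]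
    rw [← hSS, Matrix.mul_inv_rev, ← mulVec_mulVec, dotProduct_mulVec, ← mulVec_transpose, hSinv]
  have hr2 : (0 : ℝ) < r ^ 2 := by positivity
  have hyy : y ⬝ᵥ y ≤ r ^ 2 := by
    have : Invertible (r ^ 2) := invertibleOfNonzero hr2.ne'
    have hx' : (x - a) ⬝ᵥ ((r ^ 2 • A)⁻¹ *ᵥ (x - a)) ≤ 1 := hx
    rw [inv_smul _ _ hA, invOf_eq_inv, smul_mulVec, dotProduct_smul, smul_eq_mul, hquad,
      inv_mul_le_iff₀ hr2, mul_one] at hx'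
    exact hx'
  refine ⟨y, ?_, ?_⟩
  · rw [Set.mem_ofPred_eq, ← Real.sqrt_sq_eq_abs]
    exact Real.sqrt_le_sqrt hyy
  · simp only [y, mulVec_mulVec, mul_nonsing_inv S hSdet, one_mulVec, add_sub_cancel]

theorem stmt16_general {n : ℕ} (A : Matrix (Fin n) (Fin n) ℝ) (hA : A.PosDef) (a : Fin n → ℝ)
    (V : Set (Fin n → ℝ))
    (ρ : ℝ) (hρ0 : 0 < ρ)
    (hball : {x : Fin n → ℝ | Real.sqrt (x ⬝ᵥ x) ≤ ρ} ⊆ convexHull ℝ V)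
    (σ : ℝ) (hσ : 1 ≤ σ)
    (Y : Set (Fin n → ℝ)) (hY : Convex ℝ Y) (hYE : Y ⊆ ell A a)
    (hpts : ∀ v ∈ V, a + posSemidefSqrt hA.posSemidef *ᵥ ((1 / (n + σ)) • v) ∈ Y) :
    ell ((1 / ((n + σ) / ρ) ^ 2) • A) a ⊆ Y ∧ Y ⊆ ell A a := by
  set S := posSemidefSqrt hA.posSemidef
  have hns : (0 : ℝ) < n + σ := by positivity
  let f : (Fin n → ℝ) →ᵃ[ℝ] (Fin n → ℝ) :=
    (AffineEquiv.constVAdd ℝ (Fin n → ℝ) a).toAffineMap.comp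
      (S.mulVecLin ∘ₗ ((1 / ((n : ℝ) + σ)) • LinearMap.id)).toAffineMap
  have hf : ∀ v, f v = a + S *ᵥ ((1 / (n + σ)) • v) := fun v => by
    simp [f, vadd_eq_add, mulVec_smul]
  have hconv : f '' convexHull ℝ V ⊆ Y :=
    f.image_convexHull_subset hY fun v hv => (hf v).symm ▸ hpts v hv
  refine ⟨fun x hx => ?_, hYE⟩
  rw [one_div, ← inv_pow, inv_div] at hx
  obtain ⟨y, hy, rfl⟩ := ell_sq_smul_subset_image_ball hA.det_pos.ne'.isUnit
    (transpose_posSemidefSqrt hA.posSemidef) (posSemidefSqrt_mul_self hA.posSemidef) a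
    (div_pos hρ0 hns).ne' hx
  have hw : Real.sqrt (((n + σ) • y) ⬝ᵥ ((n + σ) • y)) ≤ ρ := by
    rw [smul_dotProduct, dotProduct_smul, smul_eq_mul, smul_eq_mul, ← mul_assoc,
      Real.sqrt_mul (by positivity), Real.sqrt_mul_self hns.le, ← le_div_iff₀' hns]
    rwa [abs_of_pos (div_pos hρ0 hns)] at hy
  refine hconv ⟨_, hball hw, ?_⟩
  rw [hf, smul_smul, one_div_mul_cancel hns.ne', one_smul]

theorem stmt16 {n : ℕ} (A : Matrix (Fin n) (Fin n) ℝ) (hA : A.PosDef) (a : Fin n → ℝ)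
    (V : Set (Fin n → ℝ)) (hVfin : V.Finite)
    (hVsphere : ∀ v ∈ V, Real.sqrt (v ⬝ᵥ v) = 1)
    (ρ : ℝ) (hρ0 : 0 < ρ) (hρ : ρ ≤ 1 / 4)
    (hball : {x : Fin n → ℝ | Real.sqrt (x ⬝ᵥ x) ≤ ρ} ⊆ convexHull ℝ V)
    (σ : ℝ) (hσ : 1 ≤ σ)
    (Y : Set (Fin n → ℝ)) (hY : Convex ℝ Y) (hYE : Y ⊆ ell A a)
    (hpts : ∀ v ∈ V, a + posSemidefSqrt hA.posSemidef *ᵥ ((1 / (n + σ)) • v) ∈ Y) :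
    ell ((1 / ((n + σ) / ρ) ^ 2) • A) a ⊆ Y ∧ Y ⊆ ell A a :=
  stmt16_general A hA a V ρ hρ0 hball σ hσ Y hY hYE hpts
end
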